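/- For every λ ∈ ℝ, let μ_λ be the Lie bracket on ℝ^7 with nonzero basis brackets [e1,e2]=e4, [e1,e3]=e5, [e1,e4]=e6, [e1,e6]=e7, [e2,e3]=e6, [e2,e5]=λe7, [e3,e4]=(λ-1)e7. Then μ_λ satisfies the Jacobi identity, φ = (2/19)·diag(3,5,6,8,9,11,14) is a derivation of (ℝ^7,μ_λ), and φ is pre-Einstein, i.e. trace(φ∘ψ) = trace(ψ) for every derivation ψ of (ℝ^7,μ_λ). -/

import Mathlib

open Finset

noncomputable section

/-- `ℝ⁷` with its standard basis and standard inner product. -/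
abbrev V7 : Type := Fin 7 → ℝ

/-- The standard basis vector `e i`. -/
def e (i : Fin 7) : V7 := Pi.single i 1

/-- The standard inner product on `ℝ⁷`. -/
def dot (x y : V7) : ℝ := ∑ i, x i * y i

/-- Structure constants built from a list of entries `(i, j, k, a)`, each meaning that
`μ (e i) (e j)` has component `a` along `e k` (and `μ (e j) (e i)` has component `-a`);
all unlisted basis brackets are `0`. -/
def toC (L : List (Fin 7 × Fin 7 × Fin 7 × ℝ)) (i j k : Fin 7) : ℝ :=
  (L.map fun t =>
      (if t.1 = i ∧ t.2.1 = j ∧ t.2.2.1 = k then t.2.2.2 else 0)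
    - (if t.1 = j ∧ t.2.1 = i ∧ t.2.2.1 = k then t.2.2.2 else 0)).sum

/-- The bilinear skew-symmetric map on `ℝ⁷` with structure constants `c`. -/
def br (c : Fin 7 → Fin 7 → Fin 7 → ℝ) (x y : V7) : V7 :=
  fun k => ∑ i, ∑ j, x i * y j * c i j k

lemma br_add_left (c : Fin 7 → Fin 7 → Fin 7 → ℝ) (x x' y : V7) :
    br c (x + x') y = br c x y + br c x' y := by
  funext k
  simp only [br, Pi.add_apply, ← Finset.sum_add_distrib]
  exact Finset.sum_congr rfl fun i _ => Finset.sum_congr rfl fun j _ => by ring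

lemma br_smul_left (c : Fin 7 → Fin 7 → Fin 7 → ℝ) (r : ℝ) (x y : V7) :
    br c (r • x) y = r • br c x y := by
  funext k
  simp only [br, Pi.smul_apply, smul_eq_mul, Finset.mul_sum]
  exact Finset.sum_congr rfl fun i _ => Finset.sum_congr rfl fun j _ => by ring

lemma br_add_right (c : Fin 7 → Fin 7 → Fin 7 → ℝ) (x y y' : V7) :
    br c x (y + y') = br c x y + br c x y' := by
  funext k
  simp only [br, Pi.add_apply, ← Finset.sum_add_distrib]
  exact Finset.sum_congr rfl fun i _ => Finset.sum_congr rfl fun j _ => by ring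

lemma br_smul_right (c : Fin 7 → Fin 7 → Fin 7 → ℝ) (r : ℝ) (x y : V7) :
    br c x (r • y) = r • br c x y := by
  funext k
  simp only [br, Pi.smul_apply, smul_eq_mul, Finset.mul_sum]
  exact Finset.sum_congr rfl fun i _ => Finset.sum_congr rfl fun j _ => by ring

lemma br_zero_left (c : Fin 7 → Fin 7 → Fin 7 → ℝ) (y : V7) : br c 0 y = 0 := by
  funext k; simp [br]

lemma br_zero_right (c : Fin 7 → Fin 7 → Fin 7 → ℝ) (x : V7) : br c x 0 = 0 := by
  funext k; simp [br]

/-- The space of derivations of the algebra `(ℝ⁷, br c)`, i.e. the linear maps `D` with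
`D (μ x y) = μ (D x) y + μ x (D y)` for all `x, y`, as a submodule of the endomorphisms. -/
def derivations (c : Fin 7 → Fin 7 → Fin 7 → ℝ) : Submodule ℝ (Module.End ℝ V7) where
  carrier := {D | ∀ x y, D (br c x y) = br c (D x) y + br c x (D y)}
  add_mem' := by
    intro D E hD hE x y
    simp only [LinearMap.add_apply, hD x y, hE x y, br_add_left, br_add_right]
    abel
  zero_mem' := by
    intro x y
    simp [br_zero_left, br_zero_right]
  smul_mem' := by
    intro r D hD x y
    simp only [LinearMap.smul_apply, hD x y, smul_add, br_smul_left, br_smul_right]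

/-- The Jacobi identity for the bracket `br c`. -/
def Jacobi (c : Fin 7 → Fin 7 → Fin 7 → ℝ) : Prop :=
  ∀ x y z : V7, br c (br c x y) z + br c (br c y z) x + br c (br c z x) y = 0

/-- Skew-symmetry of the bracket `br c`. -/
def Skew (c : Fin 7 → Fin 7 → Fin 7 → ℝ) : Prop :=
  ∀ x y : V7, br c x y = - br c y x

/-- The diagonal endomorphism `diag (a 1, …, a 7)` of `ℝ⁷`, `e i ↦ a i • e i`. -/
def diagL (a : Fin 7 → ℝ) : Module.End ℝ V7 :=
  LinearMap.pi fun i => a i • LinearMap.proj i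

/-- Structure constants of the bracket `μ_λ` with nonzero basis brackets
`[e1,e2]=e4, [e1,e3]=e5, [e1,e4]=e6, [e1,e6]=e7, [e2,e3]=e6, [e2,e5]=λe7,
[e3,e4]=(λ-1)e7`. -/
def c8 (lam : ℝ) : Fin 7 → Fin 7 → Fin 7 → ℝ :=
  toC [(0, 1, 3, (1:ℝ)),
   (0, 2, 4, 1),
   (0, 3, 5, 1),
   (0, 5, 6, 1),
   (1, 2, 5, 1),
   (1, 4, 6, lam),
   (2, 3, 6, lam - 1)]

/-!
The Jacobi identity and the derivation property of `φ` are finite coordinate computations.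
For the pre-Einstein property only the diagonal entries `d₁, …, d₇` of a derivation `ψ`
matter. Whenever `[e a, e b] = e k` and no other pair of basis vectors involving `e a` or `e b`
brackets into `e k`, comparing `e k`-coefficients gives `d_k = d_a + d_b`. The brackets
`[e1,e2], [e1,e3], [e1,e4], [e2,e3], [e1,e6]` leave the two-parameter family
`d = s (1,0,2,1,3,2,3) + t (0,1,0,1,0,1,1)`, and `φ - 1` is orthogonal to both vectors.
-/

lemma br_single_left (c : Fin 7 → Fin 7 → Fin 7 → ℝ) (i : Fin 7) (y : V7) (k : Fin 7) :
    br c (e i) y k = ∑ j, y j * c i j k := by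
  simp [br, e, Pi.single_apply]

lemma br_single_right (c : Fin 7 → Fin 7 → Fin 7 → ℝ) (x : V7) (j k : Fin 7) :
    br c x (e j) k = ∑ i, x i * c i j k := by
  simp [br, e, Pi.single_apply]

lemma br_single_single (c : Fin 7 → Fin 7 → Fin 7 → ℝ) (i j k : Fin 7) :
    br c (e i) (e j) k = c i j k := by
  rw [br_single_left]
  simp [e, Pi.single_apply]

lemma apply_single_diag_eq_add {c : Fin 7 → Fin 7 → Fin 7 → ℝ} {D : Module.End ℝ V7}
    (hD : D ∈ derivations c) {a b k : Fin 7} (hab : br c (e a) (e b) = e k)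
    (hleft : ∀ i ≠ a, c i b k = 0) (hright : ∀ j ≠ b, c a j k = 0) :
    D (e k) k = D (e a) a + D (e b) b := by
  have habk : c a b k = 1 := by
    rw [← br_single_single c, hab, e, Pi.single_eq_same]
  have hDk := congrFun (hD (e a) (e b)) k
  rw [hab, Pi.add_apply, br_single_right, br_single_left,
    Finset.sum_eq_single a (fun i _ hi => by rw [hleft i hi, mul_zero]) (by simp),
    Finset.sum_eq_single b (fun j _ hj => by rw [hright j hj, mul_zero]) (by simp)] at hDk
  rw [hDk, habk, mul_one, mul_one]

lemma skew_toC (L : List (Fin 7 × Fin 7 × Fin 7 × ℝ)) : Skew (toC L) := by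
  have hskew : ∀ i j k, toC L j i k = -toC L i j k := by
    intro i j k
    induction L with
    | nil => simp [toC]
    | cons t L ih => simp only [toC, List.map_cons, List.sum_cons] at ih ⊢; rw [ih]; ring
  intro x y
  funext k
  simp only [br, Pi.neg_apply, ← Finset.sum_neg_distrib]
  rw [Finset.sum_comm]
  exact Finset.sum_congr rfl fun i _ => Finset.sum_congr rfl fun j _ => by rw [hskew]; ring

lemma diagL_apply (a x : V7) (i : Fin 7) : diagL a x i = a i * x i := by
  simp [diagL]

lemma trace_eq_sum_apply_single (f : Module.End ℝ V7) :
    LinearMap.trace ℝ V7 f = ∑ i, f (e i) i := by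
  rw [LinearMap.trace_eq_matrix_trace ℝ (Pi.basisFun ℝ (Fin 7))]
  simp [Matrix.trace, e]

lemma c8_apply (lam : ℝ) (x y : V7) :
    br (c8 lam) x y =
      ![0, 0, 0, x 0 * y 1 - x 1 * y 0, x 0 * y 2 - x 2 * y 0,
        x 0 * y 3 - x 3 * y 0 + x 1 * y 2 - x 2 * y 1,
        x 0 * y 5 - x 5 * y 0 + lam * (x 1 * y 4 - x 4 * y 1)
          + (lam - 1) * (x 2 * y 3 - x 3 * y 2)] := by
  funext k
  fin_cases k <;>
    · simp +decide [br, c8, toC, Fin.sum_univ_seven]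
      try ring

lemma jacobi_c8 (lam : ℝ) : Jacobi (c8 lam) := by
  intro x y z
  funext k
  simp only [c8_apply]
  fin_cases k <;>
    · simp
      try ring

lemma phi_mem_derivations_c8 (lam : ℝ) :
    ((2/19 : ℝ) • diagL ![3, 5, 6, 8, 9, 11, 14]) ∈ derivations (c8 lam) := by
  intro x y
  funext k
  simp only [LinearMap.smul_apply, c8_apply]
  fin_cases k <;>
    · simp [diagL_apply]
      try ring

lemma c8_derivation_diag {lam : ℝ} {ψ : Module.End ℝ V7} (hψ : ψ ∈ derivations (c8 lam)) :
    ψ (e 3) 3 = ψ (e 0) 0 + ψ (e 1) 1 ∧ ψ (e 4) 4 = ψ (e 0) 0 + ψ (e 2) 2 ∧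
      ψ (e 5) 5 = ψ (e 0) 0 + ψ (e 3) 3 ∧ ψ (e 5) 5 = ψ (e 1) 1 + ψ (e 2) 2 ∧
      ψ (e 6) 6 = ψ (e 0) 0 + ψ (e 5) 5 := by
  refine ⟨apply_single_diag_eq_add hψ ?_ ?_ ?_, apply_single_diag_eq_add hψ ?_ ?_ ?_,
    apply_single_diag_eq_add hψ ?_ ?_ ?_, apply_single_diag_eq_add hψ ?_ ?_ ?_,
    apply_single_diag_eq_add hψ ?_ ?_ ?_⟩
  all_goals first
    | (intro i hi; fin_cases i <;> simp_all +decide [c8, toC])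
    | (rw [c8_apply]; funext i; fin_cases i <;> simp [e])

/-- The bracket satisfies the Jacobi identity (and is skew-symmetric), `φ` is a derivation
of it, and `φ` is pre-Einstein: `trace (φ ∘ ψ) = trace ψ` for every derivation `ψ`. -/
theorem stmt (lam : ℝ) :
    Skew (c8 lam) ∧ Jacobi (c8 lam) ∧
    ((2/19 : ℝ) • diagL ![3, 5, 6, 8, 9, 11, 14]) ∈ derivations (c8 lam) ∧
    ∀ ψ ∈ derivations (c8 lam),
      LinearMap.trace ℝ V7 (((2/19 : ℝ) • diagL ![3, 5, 6, 8, 9, 11, 14]) ∘ₗ ψ) = LinearMap.trace ℝ V7 ψ := by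
  refine ⟨skew_toC _, jacobi_c8 lam, phi_mem_derivations_c8 lam, fun ψ hψ => ?_⟩
  obtain ⟨h3, h4, h5, h5', h6⟩ := c8_derivation_diag hψ
  simp only [trace_eq_sum_apply_single, LinearMap.comp_apply, LinearMap.smul_apply,
    Pi.smul_apply, smul_eq_mul, diagL_apply, Fin.sum_univ_seven, Matrix.cons_val_zero,
    Matrix.cons_val_one, Matrix.cons_val]
  linarith
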